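/- arXiv:1404.0036 — 3 statements merged into one kernel-verified Lean document; each statement's English description precedes it below -/
import Mathlib

section
/- Fix a source (ξ1,ξ2,ξ3) and a force vector (F1,F2,F3) ∈ ℝ³, and for a target (x1,x2,x3) with x3 + ξ3 < 0 set R1 = x1−ξ1, R2 = x2−ξ2, R3 = −(x3+ξ3), R = sqrt(R1^2+R2^2+R3^2). Define the B-image displacement u_i^B = F_i/(R+R3) + R_i·F3/(R(R+R3)) − δ_{i3}(F1·R1 + F2·R2)/(R(R+R3)) − R_i(1−δ_{i3})(F1·R1 + F2·R2)/(R(R+R3)^2) for i = 1,2,3, and the scalar function Φ(x1,x2,x3) = F1·R1/(R+R3) + F2·R2/(R+R3) + F3·log(R+R3). Then u_1^B = ∂Φ/∂x1, u_2^B = ∂Φ/∂x2, and u_3^B = −∂Φ/∂x3; equivalently, (u_1^B, u_2^B, −u_3^B) is the gradient with respect to the target coordinates of F·∇_ξ̄ℬ, the derivative of ℬ(R1,R2,R3) in the image-source coordinates (ξ1,ξ2,−ξ3) contracted against F. -/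
/-- The scalar function `Φ(x1,x2,x3) = F1·R1/(R+R3) + F2·R2/(R+R3) + F3·log(R+R3)`,
i.e. `F·∇_ξ̄ℬ` in the image coordinates `R1 = x1−ξ1`, `R2 = x2−ξ2`, `R3 = −(x3+ξ3)`,
`R = sqrt(R1²+R2²+R3²)`. -/
noncomputable def PhiB (F1 F2 F3 ξ1 ξ2 ξ3 x1 x2 x3 : ℝ) : ℝ :=
  (F1 * (x1 - ξ1) + F2 * (x2 - ξ2))
      / (Real.sqrt ((x1 - ξ1) ^ 2 + (x2 - ξ2) ^ 2 + (-(x3 + ξ3)) ^ 2) + -(x3 + ξ3))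
    + F3 * Real.log
        (Real.sqrt ((x1 - ξ1) ^ 2 + (x2 - ξ2) ^ 2 + (-(x3 + ξ3)) ^ 2) + -(x3 + ξ3))

set_option maxHeartbeats 1000000 in
/-- The B-image displacement `(u_1^B, u_2^B, −u_3^B)` is the target gradient of
`Φ = F·∇_ξ̄ℬ`. -/
theorem Bimage_displacement_is_gradient
    (F1 F2 F3 ξ1 ξ2 ξ3 x1 x2 x3 : ℝ) (hx : x3 + ξ3 < 0)
    (R1 R2 R3 R : ℝ)
    (hR1 : R1 = x1 - ξ1) (hR2 : R2 = x2 - ξ2) (hR3 : R3 = -(x3 + ξ3))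
    (hR : R = Real.sqrt (R1 ^ 2 + R2 ^ 2 + R3 ^ 2)) :
    F1 / (R + R3) + R1 * F3 / (R * (R + R3))
        - R1 * (F1 * R1 + F2 * R2) / (R * (R + R3) ^ 2)
      = deriv (fun t => PhiB F1 F2 F3 ξ1 ξ2 ξ3 t x2 x3) x1 ∧
    F2 / (R + R3) + R2 * F3 / (R * (R + R3))
        - R2 * (F1 * R1 + F2 * R2) / (R * (R + R3) ^ 2)
      = deriv (fun t => PhiB F1 F2 F3 ξ1 ξ2 ξ3 x1 t x3) x2 ∧
    F3 / (R + R3) + R3 * F3 / (R * (R + R3))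
        - (F1 * R1 + F2 * R2) / (R * (R + R3))
      = -deriv (fun t => PhiB F1 F2 F3 ξ1 ξ2 ξ3 x1 x2 t) x3 := by
  subst hR1 hR2 hR3 hR
  have h3 : 0 < -(x3 + ξ3) := by linarith
  have hApos : 0 < (x1 - ξ1) ^ 2 + (x2 - ξ2) ^ 2 + (-(x3 + ξ3)) ^ 2 := by
    nlinarith [sq_nonneg (x1 - ξ1), sq_nonneg (x2 - ξ2)]
  have hRpos : 0 < Real.sqrt ((x1 - ξ1) ^ 2 + (x2 - ξ2) ^ 2 + (-(x3 + ξ3)) ^ 2) :=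
    Real.sqrt_pos.mpr hApos
  have hge : -(x3 + ξ3) ≤ Real.sqrt ((x1 - ξ1) ^ 2 + (x2 - ξ2) ^ 2 + (-(x3 + ξ3)) ^ 2) := by
    calc -(x3 + ξ3) = Real.sqrt ((-(x3 + ξ3)) ^ 2) := (Real.sqrt_sq h3.le).symm
      _ ≤ _ := Real.sqrt_le_sqrt (by nlinarith [sq_nonneg (x1 - ξ1), sq_nonneg (x2 - ξ2)])
  have hsum : 0 < Real.sqrt ((x1 - ξ1) ^ 2 + (x2 - ξ2) ^ 2 + (-(x3 + ξ3)) ^ 2) + -(x3 + ξ3) := by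
    linarith
  refine ⟨?_, ?_, ?_⟩
  · -- derivative in x1
    have hg : HasDerivAt (fun t : ℝ => (t - ξ1) ^ 2 + (x2 - ξ2) ^ 2 + (-(x3 + ξ3)) ^ 2)
        (2 * (x1 - ξ1)) x1 := by
      have h := ((((hasDerivAt_id x1).sub_const ξ1).pow 2).add_const
        ((x2 - ξ2) ^ 2)).add_const ((-(x3 + ξ3)) ^ 2)
      simpa using h
    have hs := hg.sqrt hApos.ne'
    have hden := hs.add_const (-(x3 + ξ3))
    have hnum : HasDerivAt (fun t : ℝ => F1 * (t - ξ1) + F2 * (x2 - ξ2)) F1 x1 := by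
      have h := (((hasDerivAt_id x1).sub_const ξ1).const_mul F1).add_const (F2 * (x2 - ξ2))
      simpa using h
    have hΦ := (hnum.div hden hsum.ne').add ((hden.log hsum.ne').const_mul F3)
    simp only [Pi.add_def, Pi.div_def] at hΦ
    rw [show (fun t => PhiB F1 F2 F3 ξ1 ξ2 ξ3 t x2 x3) = fun t =>
      (F1 * (t - ξ1) + F2 * (x2 - ξ2))
        / (Real.sqrt ((t - ξ1) ^ 2 + (x2 - ξ2) ^ 2 + (-(x3 + ξ3)) ^ 2) + -(x3 + ξ3))
      + F3 * Real.log
          (Real.sqrt ((t - ξ1) ^ 2 + (x2 - ξ2) ^ 2 + (-(x3 + ξ3)) ^ 2) + -(x3 + ξ3))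
      from rfl, hΦ.deriv]
    generalize hT : -(x3 + ξ3) = T at hRpos hsum ⊢
    generalize hS : Real.sqrt ((x1 - ξ1) ^ 2 + (x2 - ξ2) ^ 2 + T ^ 2) = S at hRpos hsum ⊢
    have h1 : S ≠ 0 := hRpos.ne'
    have h2 : S + T ≠ 0 := hsum.ne'
    field_simp
    ring
  · have hg : HasDerivAt (fun t : ℝ => (x1 - ξ1) ^ 2 + (t - ξ2) ^ 2 + (-(x3 + ξ3)) ^ 2)
        (2 * (x2 - ξ2)) x2 := by
      have h := ((((hasDerivAt_id x2).sub_const ξ2).pow 2).const_add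
        ((x1 - ξ1) ^ 2)).add_const ((-(x3 + ξ3)) ^ 2)
      simpa using h
    have hs := hg.sqrt hApos.ne'
    have hden := hs.add_const (-(x3 + ξ3))
    have hnum : HasDerivAt (fun t : ℝ => F1 * (x1 - ξ1) + F2 * (t - ξ2)) F2 x2 := by
      have h := (((hasDerivAt_id x2).sub_const ξ2).const_mul F2).const_add (F1 * (x1 - ξ1))
      simpa using h
    have hΦ := (hnum.div hden hsum.ne').add ((hden.log hsum.ne').const_mul F3)
    simp only [Pi.add_def, Pi.div_def] at hΦ
    rw [show (fun t => PhiB F1 F2 F3 ξ1 ξ2 ξ3 x1 t x3) = fun t =>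
      (F1 * (x1 - ξ1) + F2 * (t - ξ2))
        / (Real.sqrt ((x1 - ξ1) ^ 2 + (t - ξ2) ^ 2 + (-(x3 + ξ3)) ^ 2) + -(x3 + ξ3))
      + F3 * Real.log
          (Real.sqrt ((x1 - ξ1) ^ 2 + (t - ξ2) ^ 2 + (-(x3 + ξ3)) ^ 2) + -(x3 + ξ3))
      from rfl, hΦ.deriv]
    generalize hT : -(x3 + ξ3) = T at hRpos hsum ⊢
    generalize hS : Real.sqrt ((x1 - ξ1) ^ 2 + (x2 - ξ2) ^ 2 + T ^ 2) = S at hRpos hsum ⊢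
    have h1 : S ≠ 0 := hRpos.ne'
    have h2 : S + T ≠ 0 := hsum.ne'
    field_simp
    ring
  · have hlin : HasDerivAt (fun t : ℝ => -(t + ξ3)) (-1) x3 := by
      have h := ((hasDerivAt_id x3).add_const ξ3).neg
      exact h
    have hg : HasDerivAt (fun t : ℝ => (x1 - ξ1) ^ 2 + (x2 - ξ2) ^ 2 + (-(t + ξ3)) ^ 2)
        (-(2 * -(x3 + ξ3))) x3 := by
      have h := (hlin.pow 2).const_add ((x1 - ξ1) ^ 2 + (x2 - ξ2) ^ 2)
      refine (h : HasDerivAt (fun t : ℝ => (x1 - ξ1) ^ 2 + (x2 - ξ2) ^ 2 + (-(t + ξ3)) ^ 2) _ x3).congr_deriv ?_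
      push_cast
      ring
    have hs := hg.sqrt hApos.ne'
    have hden := hs.add hlin
    have hnum := hasDerivAt_const x3 (F1 * (x1 - ξ1) + F2 * (x2 - ξ2))
    have hΦ := (hnum.div hden hsum.ne').add ((hden.log hsum.ne').const_mul F3)
    simp only [Pi.add_def, Pi.div_def] at hΦ
    rw [show (fun t => PhiB F1 F2 F3 ξ1 ξ2 ξ3 x1 x2 t) = fun t =>
      (F1 * (x1 - ξ1) + F2 * (x2 - ξ2))
        / (Real.sqrt ((x1 - ξ1) ^ 2 + (x2 - ξ2) ^ 2 + (-(t + ξ3)) ^ 2) + -(t + ξ3))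
      + F3 * Real.log
          (Real.sqrt ((x1 - ξ1) ^ 2 + (x2 - ξ2) ^ 2 + (-(t + ξ3)) ^ 2) + -(t + ξ3))
      from rfl, hΦ.deriv]
    generalize hT : -(x3 + ξ3) = T at hRpos hsum ⊢
    generalize hS : Real.sqrt ((x1 - ξ1) ^ 2 + (x2 - ξ2) ^ 2 + T ^ 2) = S at hRpos hsum ⊢
    have h1 : S ≠ 0 := hRpos.ne'
    have h2 : S + T ≠ 0 := hsum.ne'
    field_simp
    ring
end

section
/- Let λ, μ ∈ ℝ with μ ≠ 0 and λ + 2μ ≠ 0, α = (λ+μ)/(λ+2μ), and let K_i^j[λ,μ](x;ξ) = (1/(8πμ))·[(2−α)δ_{ij}/r + α(x_i−ξ_i)(x_j−ξ_j)/r^3] denote the Kelvin kernel, where r = |x−ξ|. Let A_i^j = (1/(8πμ))·[α δ_{ij}/R + (2−α) R_i R_j/R^3], where R1 = x1−ξ1, R2 = x2−ξ2, R3 = −(x3+ξ3), R = sqrt(R1^2+R2^2+R3^2). Then for all targets x = (x1,x2,x3) and sources ξ = (ξ1,ξ2,ξ3) with the reflected target (x1,x2,−x3) distinct from ξ, one has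 A_i^j(x1,x2,x3;ξ) = −K_i^j[λ̃,μ̃]((x1,x2,−x3);ξ), where λ̃ = λ+4μ and μ̃ = −μ. In particular, the A-image kernel of Mindlin's solution is, up to sign, the free-space Kelvin kernel with modified Lamé coefficients evaluated at the reflected target. -/
/-- The free-space Kelvin kernel
`K_i^j[λ,μ](x;ξ) = (1/(8πμ))·[(2−α)δ_{ij}/r + α(x_i−ξ_i)(x_j−ξ_j)/r³]`,
with `α = (λ+μ)/(λ+2μ)` and `r = |x−ξ|`. -/
noncomputable def KelvinK (lam mu : ℝ) (i j : Fin 3) (x ξ : Fin 3 → ℝ) : ℝ :=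
  let α := (lam + mu) / (lam + 2 * mu)
  let r := Real.sqrt ((x 0 - ξ 0) ^ 2 + (x 1 - ξ 1) ^ 2 + (x 2 - ξ 2) ^ 2)
  1 / (8 * Real.pi * mu) *
    ((2 - α) * (if i = j then (1:ℝ) else 0) / r + α * (x i - ξ i) * (x j - ξ j) / r ^ 3)

/-- The A-image kernel of Mindlin's solution,
`A_i^j = (1/(8πμ))·[α δ_{ij}/R + (2−α) R_i R_j/R³]`, in the image coordinates
`R1 = x1−ξ1`, `R2 = x2−ξ2`, `R3 = −(x3+ξ3)`, `R = sqrt(R1²+R2²+R3²)`. -/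
noncomputable def AimageK (lam mu : ℝ) (i j : Fin 3) (x ξ : Fin 3 → ℝ) : ℝ :=
  let α := (lam + mu) / (lam + 2 * mu)
  let Rv : Fin 3 → ℝ := ![x 0 - ξ 0, x 1 - ξ 1, -(x 2 + ξ 2)]
  let R := Real.sqrt ((Rv 0) ^ 2 + (Rv 1) ^ 2 + (Rv 2) ^ 2)
  1 / (8 * Real.pi * mu) *
    (α * (if i = j then (1:ℝ) else 0) / R + (2 - α) * Rv i * Rv j / R ^ 3)

/-- The A-image kernel is, up to sign, the free-space Kelvin kernel with modified
Lamé coefficients `λ̃ = λ+4μ`, `μ̃ = −μ` evaluated at the reflected target: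
`A_i^j(x;ξ) = −K_i^j[λ̃,μ̃]((x1,x2,−x3);ξ)`. -/
theorem Aimage_eq_neg_Kelvin_reflected
    (lam mu : ℝ) (hmu : mu ≠ 0) (h2 : lam + 2 * mu ≠ 0)
    (x ξ : Fin 3 → ℝ) (hx : ![x 0, x 1, -x 2] ≠ ξ) (i j : Fin 3) :
    AimageK lam mu i j x ξ
      = -KelvinK (lam + 4 * mu) (-mu) i j ![x 0, x 1, -x 2] ξ := by
  have hpi := Real.pi_ne_zero
  have hsq : ((x 0 - ξ 0) ^ 2 + (x 1 - ξ 1) ^ 2 + (-(x 2 + ξ 2)) ^ 2)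
      = ((![x 0, x 1, -x 2] : Fin 3 → ℝ) 0 - ξ 0) ^ 2
        + ((![x 0, x 1, -x 2] : Fin 3 → ℝ) 1 - ξ 1) ^ 2
        + ((![x 0, x 1, -x 2] : Fin 3 → ℝ) 2 - ξ 2) ^ 2 := by
    simp [Matrix.cons_val_zero, Matrix.cons_val_one]; ring
  simp only [AimageK, KelvinK]
  rw [show lam + 4 * mu + -mu = lam + 3 * mu by ring,
      show lam + 4 * mu + 2 * -mu = lam + 2 * mu by ring]
  simp only [Matrix.cons_val_zero, Matrix.cons_val_one, Matrix.head_cons,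
    Matrix.cons_val_two, Matrix.tail_cons] at hsq ⊢
  rw [← hsq]
  set R := Real.sqrt ((x 0 - ξ 0) ^ 2 + (x 1 - ξ 1) ^ 2 + (-(x 2 + ξ 2)) ^ 2) with hR
  have hri : ((![x 0, x 1, -x 2] : Fin 3 → ℝ) i - ξ i)
      = (![x 0 - ξ 0, x 1 - ξ 1, -(x 2 + ξ 2)] : Fin 3 → ℝ) i := by
    fin_cases i <;> simp <;> ring
  have hrj : ((![x 0, x 1, -x 2] : Fin 3 → ℝ) j - ξ j)
      = (![x 0 - ξ 0, x 1 - ξ 1, -(x 2 + ξ 2)] : Fin 3 → ℝ) j := by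
    fin_cases j <;> simp <;> ring
  rw [hri, hrj]
  by_cases hR0 : R = 0
  · simp [hR0]
  · have h2' : lam + mu * 2 ≠ 0 := by rwa [mul_comm]
    field_simp
    ring
end

section
/- Let a, b, c ∈ ℝ with c < 0. Then 1/sqrt(a^2 + b^2 + c^2) = (1/(2π)) ∫_0^∞ e^{σc} ∫_0^{2π} e^{iσ(a·cos α + b·sin α)} dα dσ, where the inner integral is over α ∈ [0,2π] and the outer improper integral over σ ∈ (0,∞) converges. In particular, for targets (x1,x2,x3) and sources (ξ1,ξ2,ξ3) with x3 + ξ3 < 0, 1/sqrt((x1−ξ1)^2 + (x2−ξ2)^2 + (x3+ξ3)^2) = (1/(2π)) ∫_0^∞ e^{σ(x3+ξ3)} ∫_0^{2π} e^{iσ((x1−ξ1)cos α + (x2−ξ2)sin α)} dα dσ. -/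
open MeasureTheory

namespace PlaneWaveAux
open Set Complex Metric


lemma cexp_Ioi_int (z : ℂ) (hz : z.re < 0) :
    IntegrableOn (fun σ : ℝ => Complex.exp (σ * z)) (Set.Ioi 0) := by
  have hm : AEStronglyMeasurable (fun σ : ℝ => Complex.exp (σ * z))
      (volume.restrict (Set.Ioi (0:ℝ))) := by
    exact (Complex.continuous_exp.comp (by continuity)).aestronglyMeasurable
  refine ((exp_neg_integrableOn_Ioi 0 (b := -z.re) (by linarith)).mono' hm ?_)
  filter_upwards with σ
  simp [Complex.norm_exp, mul_comm, neg_mul]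

lemma cexp_Ioi_val (z : ℂ) (hz : z.re < 0) :
    ∫ σ in Set.Ioi (0:ℝ), Complex.exp (σ * z) = -z⁻¹ := by
  have hz0 : z ≠ 0 := fun h => by simp [h] at hz
  have hderiv : ∀ σ ∈ Ici (0:ℝ), HasDerivAt (fun σ : ℝ => z⁻¹ * Complex.exp (σ * z))
      (Complex.exp (σ * z)) σ := by
    intro σ _
    have h1 : HasDerivAt (fun σ : ℝ => (σ : ℂ) * z) z σ := by
      simpa using (Complex.ofRealCLM.hasDerivAt (x := σ)).mul_const z
    have h2 := ((Complex.hasDerivAt_exp ((σ:ℂ)*z)).comp σ h1).const_mul z⁻¹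
    convert h2 using 1
    · rfl
    · rfl
    · field_simp
  have htend : Filter.Tendsto (fun σ : ℝ => z⁻¹ * Complex.exp (σ * z)) Filter.atTop (nhds 0) := by
    rw [show (0:ℂ) = z⁻¹ * 0 by ring]
    apply Filter.Tendsto.const_mul
    rw [tendsto_zero_iff_norm_tendsto_zero]
    have : (fun σ : ℝ => ‖Complex.exp (σ * z)‖) = fun σ : ℝ => Real.exp (σ * z.re) := by
      ext σ; simp [Complex.norm_exp]
    rw [this]
    exact Real.tendsto_exp_atBot.comp (Filter.tendsto_id.atTop_mul_const_of_neg hz)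
  have := integral_Ioi_of_hasDerivAt_of_tendsto' hderiv (cexp_Ioi_int z hz) htend
  simpa using this


lemma trig_integral (A a b : ℝ) (hA : 0 < A) :
    ∫ θ in (0:ℝ)..(2*Real.pi),
        ((A:ℂ) - Complex.I * ((a * Real.cos θ + b * Real.sin θ : ℝ):ℂ))⁻¹
      = ((2 * Real.pi : ℝ) : ℂ) / ((Real.sqrt (A^2 + a^2 + b^2) : ℝ) : ℂ) := by
  set S : ℝ := Real.sqrt (A^2 + a^2 + b^2) with hSdef
  have hr2 : (0:ℝ) ≤ a^2 + b^2 := by positivity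
  have hS2 : S^2 = A^2 + a^2 + b^2 := Real.sq_sqrt (by positivity)
  have hSA : A ≤ S := by
    nlinarith [Real.sqrt_nonneg (A^2+a^2+b^2)]
  have hSpos : 0 < S := lt_of_lt_of_le hA hSA
  by_cases hab : a = 0 ∧ b = 0
  · obtain ⟨ha, hb⟩ := hab
    subst ha; subst hb
    have hSA' : S = A := by
      rw [hSdef]; simp; rw [Real.sqrt_sq hA.le]
    simp only [zero_mul, add_zero, ofReal_zero, mul_zero, sub_zero]
    rw [intervalIntegral.integral_const]
    rw [hSA', sub_zero, real_smul]
    push_cast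
    field_simp
  -- main case
  have hr2' : 0 < a^2 + b^2 := by
    rcases not_and_or.mp hab with h | h <;> positivity
  have hSA2 : A < S := by nlinarith
  set r : ℝ := Real.sqrt (a^2 + b^2) with hrdef
  have hrpos : 0 < r := Real.sqrt_pos.mpr hr2'
  have hrsq : r^2 = a^2 + b^2 := Real.sq_sqrt hr2'.le
  set β : ℂ := ((b:ℂ) + (a:ℂ) * Complex.I) / 2 with hβdef
  have h2β : (2:ℂ) * β = (b:ℂ) + (a:ℂ) * Complex.I := by rw [hβdef]; ring
  have habs2β : ‖2 * β‖ = r := by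
    rw [h2β, Complex.norm_def, Complex.normSq_add_mul_I, hrdef, add_comm (b^2)]
  have hβ : β ≠ 0 := by
    intro h
    rw [h, mul_zero, norm_zero] at habs2β
    exact hrpos.ne' habs2β.symm
  set zp : ℂ := ((A:ℂ) + S) / (2 * β) with hzpdef
  set zm : ℂ := ((A:ℂ) - S) / (2 * β) with hzmdef
  have habszp : ‖zp‖ = (A + S) / r := by
    rw [hzpdef, norm_div, habs2β]
    congr 1
    rw [show ((A:ℂ) + S) = ((A + S : ℝ) : ℂ) by push_cast; ring, Complex.norm_real, Real.norm_eq_abs,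
      abs_of_pos (by linarith)]
  have habszm : ‖zm‖ = (S - A) / r := by
    rw [hzmdef, norm_div, habs2β]
    congr 1
    rw [show ((A:ℂ) - S) = ((A - S : ℝ) : ℂ) by push_cast; ring, Complex.norm_real, Real.norm_eq_abs,
      abs_of_neg (by linarith), neg_sub]
  have hzmball : zm ∈ ball (0:ℂ) 1 := by
    rw [mem_ball, dist_zero_right, habszm, div_lt_one hrpos]
    nlinarith
  have hzpout : 1 < ‖zp‖ := by
    rw [habszp, lt_div_iff₀ hrpos, one_mul]
    nlinarith
  have hS2c : ((S:ℂ))^2 = (A:ℂ)^2 + (a:ℂ)^2 + (b:ℂ)^2 := by exact_mod_cast congrArg (Complex.ofReal) hS2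
  set δ : ℂ := ((a:ℂ) * Complex.I - b) / 2 with hδdef
  have hβδ : β * δ = -(((a:ℂ)^2 + (b:ℂ)^2)) / 4 := by
    rw [hβdef, hδdef]
    linear_combination ((a:ℂ)^2/4) * Complex.I_sq
  have hsum : β * (zp + zm) = (A:ℂ) := by
    rw [hzpdef, hzmdef]; field_simp; ring
  have hprod : β * (zp * zm) = δ := by
    have e1 : (2*β) * zp = (A:ℂ) + S := by rw [hzpdef]; field_simp
    have e2 : (2*β) * zm = (A:ℂ) - S := by rw [hzmdef]; field_simp
    have h4 : (4*β) * (β * (zp * zm)) = (4*β) * δ := by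
      linear_combination (2*β*zm)*e1 + ((A:ℂ)+(S:ℂ))*e2 - hS2c - 4*hβδ
    exact mul_left_cancel₀ (by simp [hβ] : (4:ℂ) * β ≠ 0) h4
  -- the holomorphic function
  set f : ℂ → ℂ := fun z => (-(Complex.I * β) * (z - zp))⁻¹ with hfdef
  have hfd : DiffContOnCl ℂ f (ball (0:ℂ) 1) := by
    apply DifferentiableOn.diffContOnCl
    rw [closure_ball (0:ℂ) one_ne_zero]
    intro z hz
    have hzzp : z - zp ≠ 0 := by
      rw [sub_ne_zero]
      intro h
      rw [h] at hz
      rw [mem_closedBall, dist_zero_right] at hz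
      linarith
    apply DifferentiableAt.differentiableWithinAt
    apply DifferentiableAt.inv
    · exact (differentiableAt_const _).mul (differentiableAt_id.sub_const zp)
    · exact mul_ne_zero (by simp [hβ, Complex.I_ne_zero]) hzzp
  have hC := hfd.circleIntegral_sub_inv_smul hzmball
  -- value of f at zm
  have hzmzp : zm - zp = -(S:ℂ)/β := by
    rw [hzpdef, hzmdef]; field_simp; ring
  have hSne : ((S:ℝ):ℂ) ≠ 0 := by exact_mod_cast hSpos.ne'
  have hfzm : f zm = (Complex.I * (S:ℂ))⁻¹ := by
    rw [hfdef]
    simp only []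
    rw [hzmzp]
    congr 1
    field_simp
  -- rewrite the circle integral as our interval integral
  have hpoint : ∀ θ : ℝ, deriv (circleMap 0 1) θ • ((circleMap 0 1 θ - zm)⁻¹ • f (circleMap 0 1 θ))
      = ((A:ℂ) - Complex.I * ((a * Real.cos θ + b * Real.sin θ : ℝ):ℂ))⁻¹ := by
    intro θ
    set z : ℂ := circleMap 0 1 θ with hzdef
    have habsz : ‖z‖ = 1 := by rw [hzdef]; simpa using norm_circleMap_zero 1 θ
    set Cθ : ℂ := (Real.cos θ : ℂ) with hCdef
    set Sθ : ℂ := (Real.sin θ : ℂ) with hSθdef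
    have hzeq : z = Cθ + Sθ * Complex.I := by
      rw [hzdef, circleMap]
      push_cast
      rw [Complex.exp_mul_I]
      simp [hCdef, hSθdef, Complex.ofReal_cos, Complex.ofReal_sin]
    have h1 : Cθ^2 + Sθ^2 = 1 := by
      rw [hCdef, hSθdef]
      exact_mod_cast congrArg Complex.ofReal (Real.cos_sq_add_sin_sq θ)
    have hpz : ((a:ℂ) * Cθ + (b:ℂ) * Sθ) * z = -(Complex.I * β) * z^2 - Complex.I * δ := by
      rw [hzeq, hβdef, hδdef]
      linear_combination ((a:ℂ)/2 - Sθ^2*(a:ℂ)/2 + Cθ*Sθ*(b:ℂ) + Cθ^2*(a:ℂ)/2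
        + Complex.I*Sθ^2*(b:ℂ)/2 + Complex.I*Cθ*Sθ*(a:ℂ) + Complex.I^2*Sθ^2*(a:ℂ)/2) * Complex.I_sq
        + ((a:ℂ)/2 + Complex.I*(b:ℂ)/2) * h1
    have key : (z - zm) * (-(Complex.I * β) * (z - zp))
        = ((A:ℂ) - Complex.I * ((a:ℂ) * Cθ + (b:ℂ) * Sθ)) * (z * Complex.I) := by
      linear_combination (Complex.I * z) * hsum - Complex.I * hprod - hpz
        + (((a:ℂ) * Cθ + (b:ℂ) * Sθ) * z) * Complex.I_sq
    have hzne : z ≠ 0 := by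
      intro h; rw [h] at habsz; simp at habsz
    have hzzm : z - zm ≠ 0 := by
      rw [sub_ne_zero]; intro h
      rw [mem_ball, dist_zero_right] at hzmball
      rw [← h] at hzmball; rw [habsz] at hzmball; exact lt_irrefl 1 hzmball
    have hzzp : z - zp ≠ 0 := by
      rw [sub_ne_zero]; intro h
      rw [← h, habsz] at hzpout; exact lt_irrefl 1 hzpout
    have hden2 : -(Complex.I * β) * (z - zp) ≠ 0 :=
      mul_ne_zero (by simp [hβ, Complex.I_ne_zero]) hzzp
    have hAne : (A:ℂ) - Complex.I * ((a:ℂ) * Cθ + (b:ℂ) * Sθ) ≠ 0 := by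
      intro h
      have hre := congrArg Complex.re h
      rw [hCdef, hSθdef] at hre
      simp [Complex.ext_iff] at hre
      linarith
    rw [deriv_circleMap]
    rw [← hzdef]
    rw [smul_eq_mul, smul_eq_mul]
    have hcast : ((a * Real.cos θ + b * Real.sin θ : ℝ):ℂ) = (a:ℂ) * Cθ + (b:ℂ) * Sθ := by
      push_cast [hCdef, hSθdef]; ring
    rw [hcast]
    have hinv : (z - zm)⁻¹ * f z = (((A:ℂ) - Complex.I * ((a:ℂ) * Cθ + (b:ℂ) * Sθ)) * (z * Complex.I))⁻¹ := by
      rw [hfdef]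
      simp only []
      rw [← mul_inv, key]
    rw [hinv, mul_inv]
    field_simp
  have hrw : (∫ θ in (0:ℝ)..(2*Real.pi),
      ((A:ℂ) - Complex.I * ((a * Real.cos θ + b * Real.sin θ : ℝ):ℂ))⁻¹)
      = ∮ z in C((0:ℂ), 1), (z - zm)⁻¹ • f z := by
    rw [circleIntegral]
    exact intervalIntegral.integral_congr (fun θ _ => (hpoint θ).symm)
  rw [hrw, hC, hfzm, smul_eq_mul]
  rw [mul_inv]
  push_cast
  field_simp [Complex.I_ne_zero]

section main
variable (a b c : ℝ)

noncomputable def Fm (a b c : ℝ) : ℝ × ℝ → ℂ := fun q =>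
  Complex.exp ((q.1 * c : ℝ) : ℂ) *
    Complex.exp (Complex.I * (q.1 : ℂ) * ((a * Real.cos q.2 + b * Real.sin q.2 : ℝ) : ℂ))

lemma Fm_int (hc : c < 0) :
    Integrable (Fm a b c)
      ((volume.restrict (Set.Ioi (0:ℝ))).prod (volume.restrict (Set.Ioc (0:ℝ) (2*Real.pi)))) := by
  have hcont : Continuous (Fm a b c) := by
    unfold Fm
    fun_prop
  have h1 : Integrable (fun σ : ℝ => Real.exp (σ * c)) (volume.restrict (Set.Ioi (0:ℝ))) := by
    have := exp_neg_integrableOn_Ioi 0 (show (0:ℝ) < -c by linarith)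
    refine this.congr_fun ?_ measurableSet_Ioi
    intro x _; ring_nf
  have h2 : Integrable (fun _ : ℝ => (1:ℝ)) (volume.restrict (Set.Ioc (0:ℝ) (2*Real.pi))) :=
    integrable_const 1
  have hg := h1.mul_prod h2
  refine hg.mono' hcont.aestronglyMeasurable ?_
  filter_upwards with q
  rw [Fm, norm_mul]
  simp only [Complex.norm_exp]
  rw [mul_one]
  have e1 : (((q.1 * c : ℝ):ℂ)).re = q.1 * c := by simp
  have e2 : (Complex.I * (q.1:ℂ) * ((a * Real.cos q.2 + b * Real.sin q.2 : ℝ):ℂ)).re = 0 := by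
    simp [Complex.mul_re]
  rw [e1, e2, Real.exp_zero, mul_one]

end main

section main2
variable (a b c : ℝ)

lemma main1 (hc : c < 0) :
    IntegrableOn (fun σ : ℝ =>
        Complex.exp ((σ * c : ℝ) : ℂ) *
          ∫ α in (0:ℝ)..(2 * Real.pi),
            Complex.exp (Complex.I * (σ : ℂ) *
              ((a * Real.cos α + b * Real.sin α : ℝ) : ℂ)))
      (Set.Ioi (0:ℝ)) ∧
    ((1 / Real.sqrt (a ^ 2 + b ^ 2 + c ^ 2) : ℝ) : ℂ)
      = (1 / (2 * Real.pi) : ℝ) *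
          ∫ σ in Set.Ioi (0:ℝ),
            Complex.exp ((σ * c : ℝ) : ℂ) *
              ∫ α in (0:ℝ)..(2 * Real.pi),
                Complex.exp (Complex.I * (σ : ℂ) *
                  ((a * Real.cos α + b * Real.sin α : ℝ) : ℂ)) := by
  have hEq : ∀ σ : ℝ, (∫ α, Fm a b c (σ, α) ∂(volume.restrict (Set.Ioc (0:ℝ) (2*Real.pi))))
      = Complex.exp ((σ * c : ℝ) : ℂ) *
          ∫ α in (0:ℝ)..(2 * Real.pi),
            Complex.exp (Complex.I * (σ : ℂ) * ((a * Real.cos α + b * Real.sin α : ℝ) : ℂ)) := by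
    intro σ
    rw [intervalIntegral.integral_of_le Real.two_pi_pos.le, ← integral_const_mul]
    rfl
  have hswap := integral_integral_swap (f := fun σ α => Fm a b c (σ, α))
    (μ := volume.restrict (Set.Ioi (0:ℝ))) (ν := volume.restrict (Set.Ioc (0:ℝ) (2*Real.pi)))
    (by exact Fm_int a b c hc)
  have hinner : ∀ α : ℝ, (∫ σ in Set.Ioi (0:ℝ), Fm a b c (σ, α))
      = (((-c : ℝ):ℂ) - Complex.I * ((a * Real.cos α + b * Real.sin α : ℝ) : ℂ))⁻¹ := by
    intro α
    set w : ℂ := (c:ℂ) + Complex.I * ((a * Real.cos α + b * Real.sin α : ℝ) : ℂ) with hw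
    have hwre : w.re < 0 := by
      rw [hw]; simpa [Complex.mul_re] using hc
    have : (fun σ : ℝ => Fm a b c (σ, α)) = fun σ : ℝ => Complex.exp (σ * w) := by
      funext σ
      rw [Fm, ← Complex.exp_add]
      congr 1
      rw [hw]; push_cast; ring
    rw [this, cexp_Ioi_val w hwre]
    rw [← inv_neg]
    congr 1
    rw [hw]; push_cast; ring
  have hval : (∫ σ in Set.Ioi (0:ℝ),
      Complex.exp ((σ * c : ℝ) : ℂ) *
        ∫ α in (0:ℝ)..(2 * Real.pi),
          Complex.exp (Complex.I * (σ : ℂ) * ((a * Real.cos α + b * Real.sin α : ℝ) : ℂ)))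
      = ((2 * Real.pi : ℝ) : ℂ) / ((Real.sqrt (a^2 + b^2 + c^2) : ℝ) : ℂ) := by
    rw [show (fun σ : ℝ => Complex.exp ((σ * c : ℝ) : ℂ) *
        ∫ α in (0:ℝ)..(2 * Real.pi),
          Complex.exp (Complex.I * (σ : ℂ) * ((a * Real.cos α + b * Real.sin α : ℝ) : ℂ)))
      = fun σ : ℝ => ∫ α, Fm a b c (σ, α) ∂(volume.restrict (Set.Ioc (0:ℝ) (2*Real.pi)))
      from funext fun σ => (hEq σ).symm]
    rw [hswap]
    rw [show (fun α : ℝ => ∫ σ in Set.Ioi (0:ℝ), Fm a b c (σ, α))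
      = fun α : ℝ => (((-c : ℝ):ℂ) - Complex.I * ((a * Real.cos α + b * Real.sin α : ℝ) : ℂ))⁻¹
      from funext hinner]
    rw [← intervalIntegral.integral_of_le Real.two_pi_pos.le]
    rw [trig_integral (-c) a b (by linarith)]
    congr 3
    ring
  constructor
  · have h := (Fm_int a b c hc).integral_prod_left
    rw [show (fun σ : ℝ => ∫ α, Fm a b c (σ, α) ∂(volume.restrict (Set.Ioc (0:ℝ) (2*Real.pi))))
      = _ from funext hEq] at h
    exact h
  · rw [hval]
    have hS : 0 < Real.sqrt (a^2 + b^2 + c^2) := Real.sqrt_pos.mpr (by nlinarith)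
    have hSne : ((Real.sqrt (a^2 + b^2 + c^2) : ℝ):ℂ) ≠ 0 := by exact_mod_cast hS.ne'
    have hpi : ((Real.pi : ℝ):ℂ) ≠ 0 := by exact_mod_cast Real.pi_ne_zero
    push_cast
    field_simp

end main2

end PlaneWaveAux

/-- The plane wave (Sommerfeld-type) representation of the Newtonian potential:
for `c < 0`,
`1/sqrt(a² + b² + c²) = (1/(2π)) ∫_0^∞ e^{σc} ∫_0^{2π} e^{iσ(a cos α + b sin α)} dα dσ`,
the outer improper integral converging; in particular, for `x3 + ξ3 < 0`,
the image-source potential has the corresponding representation. -/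
theorem plane_wave_representation :
    (∀ a b c : ℝ, c < 0 →
      IntegrableOn (fun σ : ℝ =>
          Complex.exp ((σ * c : ℝ) : ℂ) *
            ∫ α in (0:ℝ)..(2 * Real.pi),
              Complex.exp (Complex.I * (σ : ℂ) *
                ((a * Real.cos α + b * Real.sin α : ℝ) : ℂ)))
        (Set.Ioi (0:ℝ)) ∧
      ((1 / Real.sqrt (a ^ 2 + b ^ 2 + c ^ 2) : ℝ) : ℂ)
        = (1 / (2 * Real.pi) : ℝ) *
            ∫ σ in Set.Ioi (0:ℝ),
              Complex.exp ((σ * c : ℝ) : ℂ) *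
                ∫ α in (0:ℝ)..(2 * Real.pi),
                  Complex.exp (Complex.I * (σ : ℂ) *
                    ((a * Real.cos α + b * Real.sin α : ℝ) : ℂ))) ∧
    (∀ x1 x2 x3 ξ1 ξ2 ξ3 : ℝ, x3 + ξ3 < 0 →
      ((1 / Real.sqrt ((x1 - ξ1) ^ 2 + (x2 - ξ2) ^ 2 + (x3 + ξ3) ^ 2) : ℝ) : ℂ)
        = (1 / (2 * Real.pi) : ℝ) *
            ∫ σ in Set.Ioi (0:ℝ),
              Complex.exp ((σ * (x3 + ξ3) : ℝ) : ℂ) *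
                ∫ α in (0:ℝ)..(2 * Real.pi),
                  Complex.exp (Complex.I * (σ : ℂ) *
                    (((x1 - ξ1) * Real.cos α + (x2 - ξ2) * Real.sin α : ℝ) : ℂ))) := by
  exact ⟨fun a b c hc => PlaneWaveAux.main1 a b c hc,
    fun x1 x2 x3 ξ1 ξ2 ξ3 h => (PlaneWaveAux.main1 (x1 - ξ1) (x2 - ξ2) (x3 + ξ3) h).2⟩
end
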